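/- For normal d×d complex matrices A and B, there exists a permutation σ of {1,…,d} such that (Σ_{i=1}^d |λ_i(A) − λ_{σ(i)}(B)|²)^{1/2} ≤ ‖A − B‖₂, where λ_i(A) and λ_i(B) are any enumerations of the eigenvalues of A and B with multiplicity. -/

import Mathlib

/-!
Write `A = U diag(a) U*` and `B = V diag(b) V*` with `U`, `V` unitary; a normal matrix can be
diagonalised this way because its Hermitian real and imaginary parts commute and so have a common
orthonormal eigenbasis. For the unitary `W = U* V`, unitary invariance of the Frobenius norm gives
`‖A - B‖² = ∑ i j, |W i j|² |a i - b j|²`. The matrix `(|W i j|²)` is doubly stochastic, hence by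
Birkhoff's theorem a convex combination of permutation matrices, and the linear functional
`M ↦ ∑ i j, M i j |a i - b j|²` is at least its value `∑ i, |a i - b (σ i)|²` at one of them.
-/

open Matrix

attribute [local instance] Matrix.frobeniusNormedAddCommGroup

theorem exists_perm_apply_eq_of_map_univ_eq {ι α : Type*} [Fintype ι] [DecidableEq α]
    {f g : ι → α} (h : Finset.univ.val.map f = Finset.univ.val.map g) :
    ∃ σ : Equiv.Perm ι, ∀ i, g (σ i) = f i := by
  have hfiber : ∀ c, Fintype.card {i // f i = c} = Fintype.card {i // g i = c} := fun c => by
    simpa [Multiset.count_map, Fintype.card_subtype, Finset.card, Finset.filter_val, eq_comm] using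
      congrArg (Multiset.count c) h
  exact ⟨Equiv.ofFiberEquiv fun c => Fintype.equivOfCardEq (hfiber c), Equiv.ofFiberEquiv_map _⟩

open Module.End in
theorem LinearMap.IsSymmetric.exists_orthonormalBasis_eigenvectors_of_commute
    {𝕜 E : Type*} [RCLike 𝕜] [NormedAddCommGroup E] [InnerProductSpace 𝕜 E]
    [FiniteDimensional 𝕜 E] {n : ℕ} (hn : Module.finrank 𝕜 E = n) {S T : E →ₗ[𝕜] E}
    (hS : S.IsSymmetric) (hT : T.IsSymmetric) (hST : Commute S T) :
    ∃ (b : OrthonormalBasis (Fin n) 𝕜 E) (μ ν : Fin n → 𝕜),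
      ∀ i, S (b i) = μ i • b i ∧ T (b i) = ν i • b i := by
  classical
  -- Mathlib indexes the joint eigenspaces by the pair (eigenvalue of `T`, eigenvalue of `S`).
  let V : 𝕜 × 𝕜 → Submodule 𝕜 E := fun p => eigenspace S p.2 ⊓ eigenspace T p.1
  have hV : DirectSum.IsInternal V := hS.directSum_isInternal_of_commute hT hST
  let := hV.submodule_iSupIndep.fintypeNeBotOfFiniteDimensional
  have hW : DirectSum.IsInternal fun p : {p // V p ≠ ⊥} => V p :=
    DirectSum.isInternal_ne_bot_iff.mpr hV
  have hW' : OrthogonalFamily 𝕜 (fun p : {p // V p ≠ ⊥} => V p) (fun p => (V p).subtypeₗᵢ) :=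
    (hS.orthogonalFamily_eigenspace_inf_eigenspace hT).comp Subtype.val_injective
  let eigenvalues : Fin n → 𝕜 × 𝕜 := fun i => (hW.subordinateOrthonormalBasisIndex hn i hW').1
  refine ⟨hW.subordinateOrthonormalBasis hn hW', fun i => (eigenvalues i).2,
    fun i => (eigenvalues i).1, fun i => ?_⟩
  obtain ⟨hSi, hTi⟩ := hW.subordinateOrthonormalBasis_subordinate hn i hW'
  exact ⟨mem_eigenspace_iff.mp hSi, mem_eigenspace_iff.mp hTi⟩

namespace Matrix

section Frobenius

variable {m n 𝕜 : Type*} [Fintype m] [Fintype n] [RCLike 𝕜]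

theorem frobenius_norm_sq_eq_sum {α : Type*} [NormedAddCommGroup α] (A : Matrix m n α) :
    ‖A‖ ^ 2 = ∑ i, ∑ j, ‖A i j‖ ^ 2 := by
  simp_rw [frobenius_norm_def, ← Real.sqrt_eq_rpow, Real.rpow_two]
  exact Real.sq_sqrt (by positivity)

theorem frobenius_norm_sq_eq_re_trace (A : Matrix m n 𝕜) :
    ‖A‖ ^ 2 = RCLike.re (Aᴴ * A).trace := by
  rw [frobenius_norm_sq_eq_sum, Finset.sum_comm]
  simp [trace, mul_apply, RCLike.conj_mul]

theorem frobenius_norm_unitary_mul [DecidableEq m] {U : Matrix m m 𝕜}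
    (hU : U ∈ unitaryGroup m 𝕜) (A : Matrix m n 𝕜) : ‖U * A‖ = ‖A‖ := by
  refine (sq_eq_sq₀ (norm_nonneg _) (norm_nonneg _)).mp ?_
  rw [frobenius_norm_sq_eq_re_trace, frobenius_norm_sq_eq_re_trace, conjTranspose_mul,
    Matrix.mul_assoc, ← Matrix.mul_assoc Uᴴ, ← star_eq_conjTranspose,
    Unitary.star_mul_self_of_mem hU, Matrix.one_mul]

theorem frobenius_norm_mul_unitary [DecidableEq n] (A : Matrix m n 𝕜) {U : Matrix n n 𝕜}
    (hU : U ∈ unitaryGroup n 𝕜) : ‖A * U‖ = ‖A‖ := by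
  rw [← frobenius_norm_conjTranspose, conjTranspose_mul,
    frobenius_norm_unitary_mul (U := Uᴴ) (Unitary.star_mem hU), frobenius_norm_conjTranspose]

end Frobenius

section DoublyStochastic

variable {n 𝕜 : Type*} [Fintype n] [DecidableEq n] [RCLike 𝕜]

theorem sum_norm_sq_apply_of_mem_unitaryGroup {U : Matrix n n 𝕜} (hU : U ∈ unitaryGroup n 𝕜)
    (i : n) : ∑ j, ‖U i j‖ ^ 2 = 1 := by
  have h : (U * Uᴴ) i i = 1 := by
    rw [← star_eq_conjTranspose, Unitary.mul_star_self_of_mem hU, one_apply_eq]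
  simp only [mul_apply, conjTranspose_apply, RCLike.star_def, RCLike.mul_conj] at h
  exact_mod_cast h

theorem of_norm_sq_mem_doublyStochastic {U : Matrix n n 𝕜} (hU : U ∈ unitaryGroup n 𝕜) :
    of (fun i j => ‖U i j‖ ^ 2) ∈ doublyStochastic ℝ n := by
  rw [mem_doublyStochastic_iff_sum]
  refine ⟨fun i j => sq_nonneg _, sum_norm_sq_apply_of_mem_unitaryGroup hU, fun j => ?_⟩
  simpa using sum_norm_sq_apply_of_mem_unitaryGroup (Unitary.star_mem hU) j

theorem exists_perm_sum_le_of_mem_doublyStochastic {M : Matrix n n ℝ}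
    (hM : M ∈ doublyStochastic ℝ n) (c : n → n → ℝ) :
    ∃ σ : Equiv.Perm n, ∑ i, c i (σ i) ≤ ∑ i, ∑ j, M i j * c i j := by
  rw [← SetLike.mem_coe, doublyStochastic_eq_convexHull_permMatrix] at hM
  let φ : Matrix n n ℝ →ₗ[ℝ] ℝ :=
    { toFun := fun M => ∑ i, ∑ j, M i j * c i j
      map_add' := fun _ _ => by simp [add_mul, Finset.sum_add_distrib]
      map_smul' := fun _ _ => by simp [Finset.mul_sum, mul_assoc] }
  obtain ⟨_, ⟨σ, rfl⟩, hσ⟩ :=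
    (φ.concaveOn convex_univ).exists_le_of_mem_convexHull (Set.subset_univ _) hM
  refine ⟨σ, le_of_eq_of_le ?_ hσ⟩
  simp [φ, Equiv.toPEquiv_apply]

theorem exists_perm_sum_norm_sq_sub_le {U V : Matrix n n 𝕜} (hU : U ∈ unitaryGroup n 𝕜)
    (hV : V ∈ unitaryGroup n 𝕜) (a b : n → 𝕜) :
    ∃ σ : Equiv.Perm n, ∑ i, ‖a i - b (σ i)‖ ^ 2 ≤
      ‖U * diagonal a * star U - V * diagonal b * star V‖ ^ 2 := by
  set W := star U * V
  have hW : W ∈ unitaryGroup n 𝕜 := mul_mem (Unitary.star_mem hU) hV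
  have hconj : U * diagonal a * star U - V * diagonal b * star V =
      U * (diagonal a * W - W * diagonal b) * star V := by
    rw [mul_sub, sub_mul]
    congr 1
    · simp only [W, mul_assoc, Unitary.mul_star_self_of_mem hV, mul_one]
    · simp only [W, ← mul_assoc, Unitary.mul_star_self_of_mem hU, one_mul]
  have hentries : ‖diagonal a * W - W * diagonal b‖ ^ 2 =
      ∑ i, ∑ j, ‖W i j‖ ^ 2 * ‖a i - b j‖ ^ 2 := by
    simp [frobenius_norm_sq_eq_sum, diagonal_mul, mul_diagonal, ← sub_mul, mul_pow, mul_comm]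
  obtain ⟨σ, hσ⟩ := exists_perm_sum_le_of_mem_doublyStochastic
    (of_norm_sq_mem_doublyStochastic hW) fun i j => ‖a i - b j‖ ^ 2
  refine ⟨σ, hσ.trans_eq ?_⟩
  rw [hconj, frobenius_norm_mul_unitary _ (Unitary.star_mem hV), frobenius_norm_unitary_mul hU,
    hentries]
  rfl

end DoublyStochastic

section Spectral

variable {n : Type*} [Fintype n] [DecidableEq n]

theorem eq_mul_diagonal_mul_star_of_mulVec_eq_smul {𝕜 : Type*} [RCLike 𝕜] {A : Matrix n n 𝕜}
    (b : OrthonormalBasis n 𝕜 (EuclideanSpace 𝕜 n)) {f : n → 𝕜}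
    (hb : ∀ j, A *ᵥ b j = f j • b j) :
    ∃ U ∈ unitaryGroup n 𝕜, A = U * diagonal f * star U := by
  set U := (EuclideanSpace.basisFun n 𝕜).toBasis.toMatrix b.toBasis
  have hU : U ∈ unitaryGroup n 𝕜 :=
    (EuclideanSpace.basisFun n 𝕜).toMatrix_orthonormalBasis_mem_unitary b
  have hAU : A * U = U * diagonal f := by
    ext i j
    rw [mul_diagonal]
    simpa [U, mul_apply, Module.Basis.toMatrix_apply, mulVec, dotProduct, mul_comm]
      using congrFun (hb j) i
  exact ⟨U, hU, by rw [← hAU, mul_assoc, Unitary.mul_star_self_of_mem hU, mul_one]⟩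

open ComplexStarModule in
theorem exists_orthonormalBasis_mulVec_eq_smul_of_isStarNormal (A : Matrix n n ℂ)
    [IsStarNormal A] :
    ∃ (b : OrthonormalBasis n ℂ (EuclideanSpace ℂ n)) (f : n → ℂ),
      ∀ j, A *ᵥ b j = f j • b j := by
  set H : Matrix n n ℂ := ↑(ℜ A)
  set K : Matrix n n ℂ := ↑(ℑ A)
  have hH : (toEuclideanLin H).IsSymmetric := isSymmetric_toEuclideanLin_iff.mpr (ℜ A).2
  have hK : (toEuclideanLin K).IsSymmetric := isSymmetric_toEuclideanLin_iff.mpr (ℑ A).2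
  have hHK : Commute (toEuclideanLin H) (toEuclideanLin K) := by
    simpa [Commute, SemiconjBy, Module.End.mul_eq_comp] using
      congrArg (toEuclideanLin (n := n) (m := n)) (Commute.realPart_imaginaryPart A).eq
  obtain ⟨b, μ, ν, hb⟩ :=
    hH.exists_orthonormalBasis_eigenvectors_of_commute finrank_euclideanSpace hK hHK
  let e : Fin (Fintype.card n) ≃ n := Fintype.equivOfCardEq (Fintype.card_fin _)
  refine ⟨b.reindex e, fun j => μ (e.symm j) + Complex.I * ν (e.symm j), fun j => ?_⟩
  obtain ⟨hHj, hKj⟩ := hb (e.symm j)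
  rw [toLpLin_apply] at hHj hKj
  have hHj' := congrArg WithLp.ofLp hHj
  have hKj' := congrArg WithLp.ofLp hKj
  simp only [WithLp.ofLp_smul] at hHj' hKj'
  conv_lhs => rw [← realPart_add_I_smul_imaginaryPart A]
  rw [OrthonormalBasis.reindex_apply, add_mulVec, smul_mulVec, hHj', hKj', add_smul, mul_smul]

theorem exists_unitary_eq_mul_diagonal_mul_star_of_isStarNormal (A : Matrix n n ℂ)
    [IsStarNormal A] :
    ∃ U ∈ unitaryGroup n ℂ, ∃ f : n → ℂ, A = U * diagonal f * star U :=
  let ⟨b, f, hb⟩ := exists_orthonormalBasis_mulVec_eq_smul_of_isStarNormal A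
  let ⟨U, hU, hA⟩ := eq_mul_diagonal_mul_star_of_mulVec_eq_smul b hb
  ⟨U, hU, f, hA⟩

theorem charpoly_mul_mul_star_of_mem_unitaryGroup {R : Type*} [CommRing R] [StarRing R]
    {U : Matrix n n R} (hU : U ∈ unitaryGroup n R) (A : Matrix n n R) :
    (U * A * star U).charpoly = A.charpoly := by
  rw [mul_assoc, charpoly_mul_comm, mul_assoc, Unitary.star_mul_self_of_mem hU, mul_one]

theorem roots_charpoly_diagonal {R : Type*} [CommRing R] [IsDomain R] (f : n → R) :
    (diagonal f).charpoly.roots = Finset.univ.val.map f := by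
  rw [charpoly_diagonal, Polynomial.roots_prod]
  · simp
  · simp [Finset.prod_ne_zero_iff, Polynomial.X_sub_C_ne_zero]

end Spectral

end Matrix

/-- Hoffman–Wielandt theorem: for normal matrices `A`, `B` and any enumerations
`μA`, `μB` of their eigenvalues (with multiplicity, i.e. of the roots of the
characteristic polynomials), there is a permutation `σ` with
`(∑ i, |μA i − μB (σ i)|²)^{1/2} ≤ ‖A − B‖₂` (Frobenius norm). -/
theorem hoffman_wielandt {d : ℕ} {A B : Matrix (Fin d) (Fin d) ℂ}
    (hA : Aᴴ * A = A * Aᴴ) (hB : Bᴴ * B = B * Bᴴ)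
    (μA μB : Fin d → ℂ)
    (hμA : Multiset.map μA Finset.univ.val = A.charpoly.roots)
    (hμB : Multiset.map μB Finset.univ.val = B.charpoly.roots) :
    ∃ σ : Equiv.Perm (Fin d),
      Real.sqrt (∑ i, ‖μA i - μB (σ i)‖ ^ 2) ≤ ‖A - B‖ := by
  have : IsStarNormal A := ⟨hA⟩
  have : IsStarNormal B := ⟨hB⟩
  obtain ⟨U, hU, a, rfl⟩ := exists_unitary_eq_mul_diagonal_mul_star_of_isStarNormal A
  obtain ⟨V, hV, b, rfl⟩ := exists_unitary_eq_mul_diagonal_mul_star_of_isStarNormal B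
  rw [charpoly_mul_mul_star_of_mem_unitaryGroup hU, roots_charpoly_diagonal] at hμA
  rw [charpoly_mul_mul_star_of_mem_unitaryGroup hV, roots_charpoly_diagonal] at hμB
  obtain ⟨τa, hτa⟩ := exists_perm_apply_eq_of_map_univ_eq hμA
  obtain ⟨τb, hτb⟩ := exists_perm_apply_eq_of_map_univ_eq hμB
  obtain ⟨π, hπ⟩ := exists_perm_sum_norm_sq_sub_le hU hV a b
  refine ⟨τa.trans (π.trans τb.symm), ?_⟩
  have hsum : ∑ i, ‖μA i - μB (τa.trans (π.trans τb.symm) i)‖ ^ 2 =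
      ∑ i, ‖a i - b (π i)‖ ^ 2 := by
    simp only [← hτa, ← hτb, Equiv.trans_apply, Equiv.apply_symm_apply]
    exact Equiv.sum_comp τa fun i => ‖a i - b (π i)‖ ^ 2
  rw [hsum]
  exact (Real.sqrt_le_sqrt hπ).trans_eq (Real.sqrt_sq (norm_nonneg _))
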